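/- Let K ⊂ ℝ^d be a nonempty compact set and let ψ be a feedforward neural network with depth L ∈ ℕ, widths w_i ∈ ℕ, and continuous nonpolynomial activation functions σ_1,…,σ_L. If a measure μ ∈ M(K) satisfies ∫_K ( a_{L+1} σ_L( a_L σ_{L−1}( ⋯ σ_1(a_1ᵀ x + c_1) ⋯ ) + c_L ) + c_{L+1} ) dμ(x) = 0 for all a_1 ∈ ℝ^d, all a_2, …, a_{L+1} ∈ ℝ, and all c_1, …, c_{L+1} ∈ ℝ, then μ = 0. -/

import Mathlib

open scoped BigOperators ENNReal NNReal

/-- Parameter space `D` of a feedforward network with `L` hidden layers and width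
function `w` (`w 0 = d` is the input dimension, hidden layer `i` has width `w i` for
`i = 1, …, L`, and the output layer has width one). The component for `i : Fin L`
consists of the weight matrix `A_{i+1}` and the bias vector `b_{i+1}`; the last
component consists of the output weights `A_{L+1}` and the output bias `b_{L+1}`. -/
abbrev Params (w : ℕ → ℕ) (L : ℕ) : Type :=
  (∀ i : Fin L, ((Fin (w (i + 1)) → Fin (w i) → ℝ) × (Fin (w (i + 1)) → ℝ))) ×
    ((Fin (w L) → ℝ) × ℝ)

/-- The number of degrees of freedom `m = Σ_{i=1}^{L+1} w_i (w_{i-1} + 1)` of the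
network (with `w_{L+1} = 1`). -/
def mdim (w : ℕ → ℕ) (L : ℕ) : ℕ :=
  (∑ i ∈ Finset.range L, w (i + 1) * (w i + 1)) + (w L + 1)

/-- Output of the first `k` hidden layers of the network. -/
noncomputable def hiddenOut (σ : ℕ → ℝ → ℝ) (w : ℕ → ℕ) (L : ℕ)
    (θ : ∀ i : Fin L, ((Fin (w (i + 1)) → Fin (w i) → ℝ) × (Fin (w (i + 1)) → ℝ))) :
    ∀ k : ℕ, k ≤ L → (Fin (w 0) → ℝ) → Fin (w k) → ℝ
  | 0, _, x => x
  | k + 1, h, x => fun i =>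
      σ (k + 1)
        ((∑ j, (θ ⟨k, h⟩).1 i j * hiddenOut σ w L θ k (Nat.le_of_succ_le h) x j) +
          (θ ⟨k, h⟩).2 i)

/-- The scalar output `ψ(α, x)` of the feedforward network. -/
noncomputable def netFun (σ : ℕ → ℝ → ℝ) (w : ℕ → ℕ) (L : ℕ) (α : Params w L)
    (x : Fin (w 0) → ℝ) : ℝ :=
  (∑ j, α.2.1 j * hiddenOut σ w L α.1 L le_rfl x j) + α.2.2

lemma continuous_hiddenOut {σ : ℕ → ℝ → ℝ} {w : ℕ → ℕ} {L : ℕ}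
    (hσ : ∀ i, 1 ≤ i → i ≤ L → Continuous (σ i))
    (θ : ∀ i : Fin L, ((Fin (w (i + 1)) → Fin (w i) → ℝ) × (Fin (w (i + 1)) → ℝ))) :
    ∀ (k : ℕ) (h : k ≤ L), Continuous fun x => hiddenOut σ w L θ k h x := by
  intro k
  induction k with
  | zero =>
      intro h
      simp only [hiddenOut]
      exact continuous_id
  | succ k ih =>
      intro h
      apply continuous_pi
      intro i
      simp only [hiddenOut]
      exact (hσ (k + 1) (Nat.succ_le_succ (Nat.zero_le _)) h).comp
        ((continuous_finset_sum _ fun j _ =>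
          continuous_const.mul ((continuous_apply j).comp (ih (Nat.le_of_succ_le h)))).add
          continuous_const)

lemma continuous_netFun {σ : ℕ → ℝ → ℝ} {w : ℕ → ℕ} {L : ℕ}
    (hσ : ∀ i, 1 ≤ i → i ≤ L → Continuous (σ i)) (α : Params w L) :
    Continuous fun x => netFun σ w L α x := by
  unfold netFun
  exact (continuous_finset_sum _ fun j _ =>
    continuous_const.mul
      ((continuous_apply j).comp (continuous_hiddenOut hσ α.1 L le_rfl))).add continuous_const

/-- The parameter-to-realization map `Ψ : D → C(K)`. -/
noncomputable def Psi (σ : ℕ → ℝ → ℝ) (w : ℕ → ℕ) (L : ℕ)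
    (hσ : ∀ i, 1 ≤ i → i ≤ L → Continuous (σ i)) (K : Set (Fin (w 0) → ℝ))
    (α : Params w L) : C(K, ℝ) :=
  ⟨fun x => netFun σ w L α x, (continuous_netFun hσ α).comp continuous_subtype_val⟩

/-- The affine function `z_{a,c} : x ↦ aᵀ x + c` as an element of `C(K)`. -/
noncomputable def affineCM {n : ℕ} (K : Set (Fin n → ℝ)) (a : Fin n → ℝ) (c : ℝ) :
    C(K, ℝ) :=
  ⟨fun x => (∑ j, a j * (x : Fin n → ℝ) j) + c,
    (continuous_finset_sum _ fun j _ =>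
      continuous_const.mul ((continuous_apply j).comp continuous_subtype_val)).add
      continuous_const⟩

/-- The constant function `z_c : x ↦ c` as an element of `C(K)`. -/
noncomputable def constCM {n : ℕ} (K : Set (Fin n → ℝ)) (c : ℝ) : C(K, ℝ) :=
  ⟨fun _ => c, continuous_const⟩

/-- A function `ℝ → ℝ` is nonpolynomial if it is not the restriction of a polynomial. -/
def IsNonpolynomial (σ : ℝ → ℝ) : Prop :=
  ¬ ∃ p : Polynomial ℝ, ∀ x : ℝ, σ x = p.eval x

/-- `𝓛` is Gâteaux differentiable in its first argument at `(v, y)` with partial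
derivative (identified with an element of `M(K) = C(K)*`) given by the continuous
linear functional `T`. -/
def HasGateauxDerivFirst {n : ℕ} {K : Set (Fin n → ℝ)}
    (𝓛 : C(K, ℝ) → C(K, ℝ) → ℝ) (v y : C(K, ℝ)) (T : C(K, ℝ) →L[ℝ] ℝ) : Prop :=
  ∀ h : C(K, ℝ), Filter.Tendsto (fun s : ℝ => (𝓛 (v + s • h) y - 𝓛 v y) / s)
    (nhdsWithin 0 (Set.Ioi 0)) (nhds (T h))

/-!
For `u ∈ C(K)` and a continuous nonpolynomial `σ`, a functional `T ∈ C(K)*` that kills every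
`σ(a u + b)` kills every `g ∘ u`: pulled back to the compact set `u(K) ⊆ ℝ`, this is the dual
form of the Leshno–Lin–Pinkus–Schocken theorem. There one mollifies `σ` to a smooth `ρ` and
differentiates `a ↦ T(ρ(a t + b))` `k` times at `a = 0`, getting `ρ⁽ᵏ⁾(b) · T(tᵏ) = 0`; if
`T(tᵏ) ≠ 0`, every mollification of `σ` would be a polynomial of degree `< k`, and so would be
their pointwise limit `σ`. Hence `T` kills all polynomials in `t`, and Weierstrass concludes.

Running this from the last hidden layer down, one neuron at a time (a hidden neuron of layer
`k + 1` is `σ_{k+1}` of an affine readout of layer `k`), `T` kills `g(aᵀx + c)` for every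
continuous `g`, in particular every `exp(aᵀx)`. These span a subalgebra separating points, so
`T = 0` by Stone–Weierstrass.
-/

open MeasureTheory Filter Topology Polynomial
open scoped ContDiff Convolution

theorem ContinuousMap.hasDerivAt_curry {Y : Type*} [TopologicalSpace Y] [CompactSpace Y]
    {F F' : C(ℝ × Y, ℝ)} (hF : ∀ s x, HasDerivAt (fun r => F (r, x)) (F' (s, x)) s) (s : ℝ) :
    HasDerivAt F.curry (F'.curry s) s := by
  have hcurry_eq : ∀ s, F.curry s = F.curry 0 + ∫ r in (0 : ℝ)..s, F'.curry r := by
    intro s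
    ext x
    rw [ContinuousMap.add_apply, ← ContinuousMap.evalCLM_apply ℝ x (∫ _ in _.._, _),
      ← ContinuousLinearMap.intervalIntegral_comp_comm _
        (F'.curry.continuous.intervalIntegrable 0 s)]
    simp only [ContinuousMap.evalCLM_apply, ContinuousMap.curry_apply]
    rw [intervalIntegral.integral_eq_sub_of_hasDerivAt (fun r _ => hF r x)
      ((F'.continuous.comp (by fun_prop)).intervalIntegrable 0 s)]
    ring
  rw [funext hcurry_eq]
  exact (F'.curry.continuous.integral_hasStrictDerivAt 0 s).hasDerivAt.const_add _

theorem ContinuousLinearMap.map_eq_zero_of_eq_integral_curry {Y : Type*} [TopologicalSpace Y]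
    [CompactSpace Y] (ν : C(Y, ℝ) →L[ℝ] ℝ) {F : C(ℝ × Y, ℝ)} (hF : ∀ y, ν (F.curry y) = 0)
    {η : ℝ → ℝ} (hη : Continuous η) (hηc : HasCompactSupport η) {G : C(Y, ℝ)}
    (hG : ∀ x, G x = ∫ y, η y * F (y, x)) : ν G = 0 := by
  have hinteg : Integrable fun y => η y • F.curry y :=
    (hη.smul F.curry.continuous).integrable_of_hasCompactSupport hηc.smul_right
  have hG_eq : G = ∫ y, η y • F.curry y := by
    ext x
    rw [hG, ← ContinuousMap.evalCLM_apply ℝ x (∫ _, _),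
      ← (ContinuousMap.evalCLM ℝ x).integral_comp_comm hinteg]
    simp
  rw [hG_eq, ← ν.integral_comp_comm hinteg]
  simp [hF]

theorem ContinuousLinearMap.eq_zero_of_topologicalClosure_eq_top {Y : Type*}
    [TopologicalSpace Y] [CompactSpace Y] {A : Subalgebra ℝ C(Y, ℝ)}
    (hA : A.topologicalClosure = ⊤) (ν : C(Y, ℝ) →L[ℝ] ℝ) (h : ∀ g ∈ A, ν g = 0) : ν = 0 := by
  have hdense : Dense (A : Set C(Y, ℝ)) := by
    rw [dense_iff_closure_eq, ← Subalgebra.topologicalClosure_coe, hA, Algebra.coe_top]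
  exact ContinuousLinearMap.ext_on (hdense.mono Submodule.subset_span) fun g hg => h g hg

noncomputable def degreeLTFunctions (k : ℕ) : Submodule ℝ (ℝ → ℝ) :=
  (degreeLT ℝ k).map (LinearMap.pi leval)

theorem isClosed_degreeLTFunctions (k : ℕ) : IsClosed (degreeLTFunctions k : Set (ℝ → ℝ)) := by
  have : FiniteDimensional ℝ (degreeLT ℝ k) := (degreeLTEquiv ℝ k).symm.finiteDimensional
  unfold degreeLTFunctions
  exact Submodule.closed_of_finiteDimensional _

theorem mem_degreeLTFunctions_of_iteratedDeriv_eq_zero {k : ℕ} {ρ : ℝ → ℝ} (hρ : ContDiff ℝ k ρ)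
    (h : iteratedDeriv k ρ = 0) : ρ ∈ degreeLTFunctions k := by
  cases k with
  | zero =>
    rw [iteratedDeriv_zero] at h
    exact h ▸ zero_mem _
  | succ n =>
    let p : ℝ[X] := ∑ i : Fin (n + 1), C (iteratedDeriv i ρ 0 / (i : ℕ).factorial) * X ^ (i : ℕ)
    have hρp : ∀ x ≠ 0, ρ x = p.eval x := by
      intro x hx
      obtain ⟨x', -, hx'⟩ := taylor_mean_remainder_lagrange_iteratedDeriv hx.symm
        (hρ.contDiffOn (s := Set.uIcc 0 x))
      rw [h, Pi.zero_apply, zero_mul, zero_div, sub_eq_zero, taylor_within_apply,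
        Finset.sum_range] at hx'
      rw [hx', eval_finsetSum]
      refine Finset.sum_congr rfl fun i _ => ?_
      rw [iteratedDerivWithin_eq_iteratedDeriv (uniqueDiffOn_uIcc hx.symm)
        (hρ.contDiffAt.of_le (mod_cast i.is_lt.le)) Set.left_mem_uIcc]
      simp only [sub_zero, smul_eq_mul, eval_mul, eval_C, eval_pow, eval_X]
      ring
    refine ⟨p, mem_degreeLT.2 (degree_sum_fin_lt _), funext fun x => ?_⟩
    have hcont : Continuous fun x => p.eval x := p.continuous
    exact congrFun (hcont.ext_on (dense_compl_singleton 0) hρ.continuous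
      fun x hx => (hρp x hx).symm) x

noncomputable def mollify (η : ContDiffBump (0 : ℝ)) (f : C(ℝ, ℝ)) : C(ℝ, ℝ) :=
  ⟨η.normed volume ⋆[ContinuousLinearMap.lsmul ℝ ℝ, volume] f,
    (η.hasCompactSupport_normed.contDiff_convolution_left _ η.contDiff_normed
      f.continuous.locallyIntegrable (n := 0)).continuous⟩

theorem contDiff_mollify (η : ContDiffBump (0 : ℝ)) (f : C(ℝ, ℝ)) : ContDiff ℝ ∞ (mollify η f) :=
  η.hasCompactSupport_normed.contDiff_convolution_left _ η.contDiff_normed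
    f.continuous.locallyIntegrable

theorem mollify_apply (η : ContDiffBump (0 : ℝ)) (f : C(ℝ, ℝ)) (x : ℝ) :
    mollify η f x = ∫ y, η.normed volume y * f (x - y) := by
  simp [mollify, convolution_def]

noncomputable def shrinkingBump (n : ℕ) : ContDiffBump (0 : ℝ) :=
  ⟨1 / (n + 2), 1 / (n + 1), by positivity, by gcongr; linarith⟩

theorem tendsto_mollify_shrinkingBump (f : C(ℝ, ℝ)) :
    Tendsto (fun n => ⇑(mollify (shrinkingBump n) f)) atTop (𝓝 f) := by
  refine tendsto_pi_nhds.2 fun x =>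
    ContDiffBump.convolution_tendsto_right_of_continuous ?_ f.continuous x
  exact tendsto_one_div_add_atTop_nhds_zero_nat

def affineOn (J : Set ℝ) (a b : ℝ) : C(J, ℝ) := ⟨fun t => a * t + b, by fun_prop⟩

section Ridge

variable {J : Set ℝ} [CompactSpace J] (ν : C(J, ℝ) →L[ℝ] ℝ)

theorem map_mollify_comp_affineOn_eq_zero {f : C(ℝ, ℝ)}
    (hν : ∀ a b, ν (f.comp (affineOn J a b)) = 0) (η : ContDiffBump (0 : ℝ)) (a b : ℝ) :
    ν ((mollify η f).comp (affineOn J a b)) = 0 := by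
  refine ν.map_eq_zero_of_eq_integral_curry (F := ⟨fun p => f (a * p.2 + b - p.1), by fun_prop⟩)
    (fun y => ?_) (η.continuous_normed (μ := volume)) η.hasCompactSupport_normed (fun t => ?_)
  · convert hν a (b - y) using 2
    ext t
    simp [affineOn, add_sub_assoc]
  · simp [mollify_apply, affineOn]

theorem map_pow_mul_comp_affineOn_eq_zero (ψ : ℕ → C(ℝ, ℝ))
    (hψ : ∀ k t, HasDerivAt (ψ k) (ψ (k + 1) t) t)
    (h₀ : ∀ a b, ν ((ψ 0).comp (affineOn J a b)) = 0) (k : ℕ) (a b : ℝ) :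
    ν ((ContinuousMap.id ℝ).restrict J ^ k * (ψ k).comp (affineOn J a b)) = 0 := by
  induction k generalizing a with
  | zero => simpa using h₀ a b
  | succ k ih =>
    let F : C(ℝ × J, ℝ) := ⟨fun p => (p.2 : ℝ) ^ k * ψ k (p.1 * p.2 + b), by fun_prop⟩
    let F' : C(ℝ × J, ℝ) := ⟨fun p => (p.2 : ℝ) ^ (k + 1) * ψ (k + 1) (p.1 * p.2 + b), by fun_prop⟩
    have hF : ∀ s t, HasDerivAt (fun r => F (r, t)) (F' (s, t)) s := by
      intro s t
      refine (((hψ k _).comp s ((hasDerivAt_mul_const (t : ℝ)).add_const b)).const_mul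
        ((t : ℝ) ^ k)).congr_deriv ?_
      simp only [F', ContinuousMap.coe_mk]
      ring
    have hconst : (fun s => ν (F.curry s)) = fun _ => 0 := funext fun s => ih s
    have hderiv := ν.hasFDerivAt.comp_hasDerivAt a (ContinuousMap.hasDerivAt_curry hF a)
    rw [Function.comp_def, hconst] at hderiv
    exact hderiv.unique (hasDerivAt_const a 0)

theorem map_pow_eq_zero_of_map_comp_affineOn_eq_zero {f : C(ℝ, ℝ)} (hf : IsNonpolynomial f)
    (hν : ∀ a b, ν (f.comp (affineOn J a b)) = 0) (k : ℕ) :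
    ν ((ContinuousMap.id ℝ).restrict J ^ k) = 0 := by
  by_contra hk
  have hf' : ⇑f ∉ degreeLTFunctions k := fun ⟨p, _, hp⟩ => hf ⟨p, fun x => (congrFun hp x).symm⟩
  obtain ⟨n, hn⟩ := ((tendsto_mollify_shrinkingBump f).eventually
    ((isClosed_degreeLTFunctions k).isOpen_compl.mem_nhds hf')).exists
  set ρ := mollify (shrinkingBump n) f
  have hρ : ContDiff ℝ ∞ ρ := contDiff_mollify _ f
  let ψ : ℕ → C(ℝ, ℝ) := fun i =>
    ⟨iteratedDeriv i ρ, hρ.continuous_iteratedDeriv i (mod_cast le_top)⟩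
  have hψ : ∀ i t, HasDerivAt (ψ i) (ψ (i + 1) t) t := fun i t => by
    simpa [ψ, iteratedDeriv_succ] using
      ((hρ.differentiable_iteratedDeriv i (mod_cast WithTop.coe_lt_top _)) t).hasDerivAt
  refine hn (mem_degreeLTFunctions_of_iteratedDeriv_eq_zero (hρ.of_le (mod_cast le_top))
    (funext fun b => ?_))
  have h := map_pow_mul_comp_affineOn_eq_zero ν ψ hψ
    (map_mollify_comp_affineOn_eq_zero ν hν (shrinkingBump n)) k 0 b
  have hsmul : (ContinuousMap.id ℝ).restrict J ^ k * (ψ k).comp (affineOn J 0 b)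
      = iteratedDeriv k ρ b • (ContinuousMap.id ℝ).restrict J ^ k := by
    ext t
    simp [ψ, affineOn, mul_comm]
  rw [hsmul, map_smul, smul_eq_mul] at h
  exact (mul_eq_zero.mp h).resolve_right hk

theorem eq_zero_of_map_comp_affineOn_eq_zero {f : C(ℝ, ℝ)} (hf : IsNonpolynomial f)
    (hν : ∀ a b, ν (f.comp (affineOn J a b)) = 0) : ν = 0 := by
  refine ν.eq_zero_of_topologicalClosure_eq_top (polynomialFunctions.topologicalClosure J) ?_
  rintro - ⟨p, -, rfl⟩
  have hX : toContinuousMapOnAlgHom J X = (ContinuousMap.id ℝ).restrict J := by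
    ext t
    simp
  change ν (toContinuousMapOnAlgHom J p) = 0
  rw [← aeval_X_left_apply p, ← aeval_algHom_apply,
    hX, aeval_eq_sum_range, map_sum]
  simp [map_pow_eq_zero_of_map_comp_affineOn_eq_zero ν hf hν]

end Ridge

theorem map_comp_eq_zero_of_map_ridge_eq_zero {Y : Type*} [TopologicalSpace Y] [CompactSpace Y]
    (T : C(Y, ℝ) →L[ℝ] ℝ) (u : C(Y, ℝ)) {f : C(ℝ, ℝ)} (hf : IsNonpolynomial f)
    (h : ∀ a b : ℝ, T (f.comp (a • u + ContinuousMap.const Y b)) = 0) (g : C(ℝ, ℝ)) :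
    T (g.comp u) = 0 := by
  have : CompactSpace (Set.range u) := isCompact_iff_compactSpace.mp (isCompact_range u.continuous)
  let u' : C(Y, Set.range u) := ⟨Set.rangeFactorization u, u.continuous.subtype_mk _⟩
  let ν : C(Set.range u, ℝ) →L[ℝ] ℝ :=
    T.comp ⟨(ContinuousMap.compRightAlgHom ℝ ℝ u').toLinearMap, ContinuousMap.continuous_precomp u'⟩
  have hν : ν = 0 := eq_zero_of_map_comp_affineOn_eq_zero ν hf fun a b => h a b
  exact congrArg (· (g.restrict (Set.range u))) hν

abbrev HiddenParams (w : ℕ → ℕ) (L : ℕ) : Type :=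
  ∀ i : Fin L, (Fin (w (i + 1)) → Fin (w i) → ℝ) × (Fin (w (i + 1)) → ℝ)

section Network

variable {σ : ℕ → ℝ → ℝ} {w : ℕ → ℕ} {L : ℕ}

theorem hiddenOut_congr {θ θ' : HiddenParams w L} {k : ℕ} (hk : k ≤ L)
    (h : ∀ i : Fin L, (i : ℕ) < k → θ i = θ' i) :
    hiddenOut σ w L θ k hk = hiddenOut σ w L θ' k hk := by
  induction k with
  | zero => rfl
  | succ k ih =>
    funext x i
    simp only [hiddenOut]
    rw [ih _ fun i hi => h i (Nat.lt_succ_of_lt hi), h ⟨k, hk⟩ (Nat.lt_succ_self k)]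

theorem hiddenOut_update_succ (θ : HiddenParams w L) {k : ℕ} (hk : k + 1 ≤ L)
    (a : Fin (w k) → ℝ) (c α β : ℝ) (x : Fin (w 0) → ℝ) (i : Fin (w (k + 1))) :
    hiddenOut σ w L (Function.update θ ⟨k, hk⟩ (fun _ => α • a, fun _ => α * c + β)) (k + 1) hk x i
      = σ (k + 1) (α * (∑ j, a j * hiddenOut σ w L θ k (Nat.le_of_succ_le hk) x j + c) + β) := by
  simp only [hiddenOut]
  rw [hiddenOut_congr (θ' := θ) (Nat.le_of_succ_le hk) fun i hi =>
    Function.update_of_ne (Fin.ne_of_val_ne hi.ne) _ _, Function.update_self]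
  simp only [Pi.smul_apply, smul_eq_mul, mul_add, Finset.mul_sum, mul_assoc, add_assoc]

/-- `Psi σ w L hσ K α` is `readout hσ K α.1 L le_rfl α.2.1 α.2.2`, and the readout of layer `0`
is `affineCM K a c`. -/
noncomputable def readout (hσ : ∀ i, 1 ≤ i → i ≤ L → Continuous (σ i))
    (K : Set (Fin (w 0) → ℝ)) (θ : HiddenParams w L) (k : ℕ) (hk : k ≤ L) (a : Fin (w k) → ℝ)
    (c : ℝ) : C(K, ℝ) :=
  ⟨fun x => ∑ j, a j * hiddenOut σ w L θ k hk x j + c,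
    by have := continuous_hiddenOut hσ θ k hk; fun_prop⟩

variable (hσ : ∀ i, 1 ≤ i → i ≤ L → Continuous (σ i)) (K : Set (Fin (w 0) → ℝ)) [CompactSpace K]

theorem map_comp_readout_eq_zero
    (hσnp : ∀ i, 1 ≤ i → i ≤ L → IsNonpolynomial (σ i)) (T : C(K, ℝ) →L[ℝ] ℝ) {k : ℕ}
    (hk : k + 1 ≤ L) (hw : 0 < w (k + 1))
    (h : ∀ θ a c, T (readout hσ K θ (k + 1) hk a c) = 0) (θ : HiddenParams w L)
    (a : Fin (w k) → ℝ) (c : ℝ) (g : C(ℝ, ℝ)) :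
    T (g.comp (readout hσ K θ k (Nat.le_of_succ_le hk) a c)) = 0 := by
  refine map_comp_eq_zero_of_map_ridge_eq_zero T _
    (f := ⟨σ (k + 1), hσ _ k.succ_pos hk⟩) (hσnp _ k.succ_pos hk) (fun α β => ?_) g
  convert h (Function.update θ ⟨k, hk⟩ (fun _ => α • a, fun _ => α * c + β))
    (Pi.single ⟨0, hw⟩ 1) 0 using 2
  ext x
  simp [readout, hiddenOut_update_succ, Pi.single_apply]

theorem map_readout_eq_zero
    (hσnp : ∀ i, 1 ≤ i → i ≤ L → IsNonpolynomial (σ i)) (hw : ∀ k < L, 0 < w (k + 1))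
    (T : C(K, ℝ) →L[ℝ] ℝ) (hT : ∀ α, T (Psi σ w L hσ K α) = 0) {k : ℕ} (hk : k ≤ L) :
    ∀ θ a c, T (readout hσ K θ k hk a c) = 0 := by
  induction hk using Nat.decreasingInduction with
  | self => exact fun θ a c => hT (θ, a, c)
  | of_succ k hk ih =>
    exact fun θ a c => map_comp_readout_eq_zero hσ K hσnp T hk (hw k hk) ih θ a c (.id ℝ)

end Network

theorem eq_zero_of_map_exp_comp_affineCM_eq_zero {n : ℕ} {K : Set (Fin n → ℝ)} [CompactSpace K]
    (T : C(K, ℝ) →L[ℝ] ℝ) (h : ∀ a, T ((⟨Real.exp, Real.continuous_exp⟩ : C(ℝ, ℝ)).comp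
      (affineCM K a 0)) = 0) : T = 0 := by
  let E : (Fin n → ℝ) → C(K, ℝ) := fun a => (⟨Real.exp, Real.continuous_exp⟩ : C(ℝ, ℝ)).comp
    (affineCM K a 0)
  let M : Submonoid C(K, ℝ) :=
    { carrier := Set.range E
      one_mem' := ⟨0, by ext; simp [E, affineCM]⟩
      mul_mem' := by
        rintro _ _ ⟨a, rfl⟩ ⟨b, rfl⟩
        refine ⟨a + b, ?_⟩
        ext x
        simp [E, affineCM, add_mul, Finset.sum_add_distrib, Real.exp_add] }
  refine T.eq_zero_of_topologicalClosure_eq_top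
    (ContinuousMap.subalgebra_topologicalClosure_eq_top_of_separatesPoints
      (Algebra.adjoin ℝ (M : Set C(K, ℝ))) ?_) fun g hg => ?_
  · intro x y hxy
    obtain ⟨i, hi⟩ : ∃ i, (x : Fin n → ℝ) i ≠ (y : Fin n → ℝ) i := by
      by_contra! hall
      exact hxy (Subtype.ext (funext hall))
    refine ⟨_, ⟨E (Pi.single i 1), Algebra.subset_adjoin ⟨_, rfl⟩, rfl⟩, ?_⟩
    simpa [E, affineCM, Pi.single_apply] using hi
  · rw [← Subalgebra.mem_toSubmodule, Algebra.adjoin_eq_span, Submonoid.closure_eq] at hg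
    exact LinearMap.mem_ker.mp ((Submodule.span_le (p := LinearMap.ker (T : C(K, ℝ) →ₗ[ℝ] ℝ))).mpr
      (by rintro _ ⟨a, rfl⟩; exact h a) hg)

theorem eq_zero_of_map_Psi_eq_zero {σ : ℕ → ℝ → ℝ} {w : ℕ → ℕ} {L : ℕ} (hL : 0 < L)
    (hσ : ∀ i, 1 ≤ i → i ≤ L → Continuous (σ i))
    (hσnp : ∀ i, 1 ≤ i → i ≤ L → IsNonpolynomial (σ i)) (hw : ∀ k < L, 0 < w (k + 1))
    {K : Set (Fin (w 0) → ℝ)} [CompactSpace K] (T : C(K, ℝ) →L[ℝ] ℝ)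
    (hT : ∀ α, T (Psi σ w L hσ K α) = 0) : T = 0 :=
  eq_zero_of_map_exp_comp_affineCM_eq_zero T fun a =>
    map_comp_readout_eq_zero hσ K hσnp T hL (hw 0 hL)
      (map_readout_eq_zero hσ K hσnp hw T hT hL) (fun _ => (0, 0)) a 0 _

theorem annihilator_of_width_one_networks_is_zero
    (d L : ℕ) (hL : 0 < L)
    (σ : ℕ → ℝ → ℝ)
    (hσ : ∀ i, 1 ≤ i → i ≤ L → Continuous (σ i))
    (hσnp : ∀ i, 1 ≤ i → i ≤ L → IsNonpolynomial (σ i))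
    (K : Set (Fin d → ℝ)) (hKc : IsCompact K)
    (T : C(K, ℝ) →L[ℝ] ℝ)
    (hT : ∀ α : Params (fun k => match k with | 0 => d | _ + 1 => 1) L,
      T (Psi σ (fun k => match k with | 0 => d | _ + 1 => 1) L hσ K α) = 0) :
    T = 0 := by
  have : CompactSpace K := isCompact_iff_compactSpace.mp hKc
  exact eq_zero_of_map_Psi_eq_zero (w := fun k => match k with | 0 => d | _ + 1 => 1) hL hσ hσnp
    (fun _ _ => Nat.one_pos) T hT
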